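/- (Borel–Bernstein for θ-expansions, convergence part) Let φ : ℕ₊ → (0,∞) be a function with Σ_{n≥1} 1/φ(n) < ∞. Then the set A_φ = {x ∈ Ω : a_n(x) > φ(n) for infinitely many n} has normalized Lebesgue measure λ_θ(A_φ) = 0. -/

import Mathlib

/-!
The measure with density `1 / (1 + θ x)` on `(0, θ]` is invariant under `T_θ`: the preimage
of `(0, b]` is the disjoint union over the digits `k ≥ m` of the intervals
`[1 / (b + kθ), 1 / (kθ)]`, whose measures telescope to that of `(0, b]` because `mθ = 1 / θ`.
The event `a_n(x) > φ(n)` is the `T_θ^{n-1}`-preimage of `{a_1 > φ(n)} ⊆ (0, 1 / (θ φ(n))]`,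
so by invariance its measure is `O(1 / φ(n))`, and Borel–Cantelli applies. The invariant
measure and Lebesgue measure on `(0, θ]` have the same null sets.
-/

noncomputable section
open MeasureTheory Filter Set

namespace Theta

/-- θ = 1/√m -/
def th (m : ℕ) : ℝ := 1 / Real.sqrt m

/-- The θ-expansion map T_θ on [0,θ]. -/
def T (m : ℕ) (x : ℝ) : ℝ := if x = 0 then 0 else 1 / x - th m * ⌊1 / (x * th m)⌋₊

/-- The n-th digit a_n(x) (n ≥ 1), a_n(x) = a_1(T_θ^{n-1} x) with a_1(x) = ⌊1/(xθ)⌋. -/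
def a (m n : ℕ) (x : ℝ) : ℕ := ⌊1 / ((T m)^[n - 1] x * th m)⌋₊

/-- Ω: the irrationals in (0,θ). -/
def Omega (m : ℕ) : Set ℝ := {x | x ∈ Set.Ioo 0 (th m) ∧ Irrational x}

/-- Convergent numerators, shifted: `p m x (n+1)` is p_n(x), `p m x 0` is p_{-1} = 1. -/
def p (m : ℕ) (x : ℝ) : ℕ → ℝ
  | 0 => 1
  | 1 => 0
  | n + 2 => (a m (n + 1) x) * th m * p m x (n + 1) + p m x n

/-- Convergent denominators, shifted: `q m x (n+1)` is q_n(x), `q m x 0` is q_{-1} = 0. -/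
def q (m : ℕ) (x : ℝ) : ℕ → ℝ
  | 0 => 0
  | 1 => 1
  | n + 2 => (a m (n + 1) x) * th m * q m x (n + 1) + q m x n

/-- Normalized Lebesgue measure on [0,θ]: λ_θ(A) = Leb(A)/θ (as a real number). -/
def lam (m : ℕ) (A : Set ℝ) : ℝ := (volume A).toReal / th m


end Theta

open scoped ENNReal Topology

theorem hasSum_sub_succ_of_tendsto {f : ℕ → ℝ} {l : ℝ} (hf : Tendsto f atTop (𝓝 l))
    (hnonneg : ∀ n, 0 ≤ f n - f (n + 1)) : HasSum (fun n => f n - f (n + 1)) (f 0 - l) := by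
  rw [hasSum_iff_tendsto_nat_of_nonneg hnonneg]
  simpa only [Finset.sum_range_sub'] using tendsto_const_nhds.sub hf

theorem MeasureTheory.MeasurePreserving.measure_limsup_preimage_iterate_eq_zero {α : Type*}
    [MeasurableSpace α] {μ : Measure α} {f : α → α} (hf : MeasurePreserving f μ μ)
    {s : ℕ → Set α} (hs : ∀ n, NullMeasurableSet (s n) μ)
    (hsum : ∑' n, μ (s n) ≠ ∞) :
    μ (limsup (fun n => f^[n] ⁻¹' s n) atTop) = 0 :=
  measure_limsup_atTop_eq_zero <| by simpa only [(hf.iterate _).measure_preimage (hs _)] using hsum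

namespace Theta

variable {m : ℕ}

theorem th_mul_th (m : ℕ) : th m * th m = (m : ℝ)⁻¹ := by
  rw [th, div_mul_div_comm, one_mul, Real.mul_self_sqrt m.cast_nonneg, one_div]

theorem th_pos (hm : 0 < m) : 0 < th m := by
  unfold th
  positivity

theorem one_div_natCast_mul_th (hm : 0 < m) : 1 / (m * th m) = th m := by
  have hθ := th_pos hm
  have hθθ := th_mul_th m
  field_simp at hθθ ⊢
  nlinarith

theorem floor_one_div_mul_th_eq_iff (hm : 0 < m) {x : ℝ} (hx : 0 < x) (k : ℕ) :
    ⌊1 / (x * th m)⌋₊ = k ↔ k * th m ≤ 1 / x ∧ 1 / x < (k + 1) * th m := by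
  have hθ := th_pos hm
  rw [Nat.floor_eq_iff (by positivity), ← div_div, le_div_iff₀ hθ, div_lt_iff₀ hθ]

theorem T_of_pos {x : ℝ} (hx : 0 < x) : T m x = 1 / x - th m * ⌊1 / (x * th m)⌋₊ :=
  if_neg hx.ne'

theorem mem_Ioc_th_iff (hm : 0 < m) {x : ℝ} (hx : 0 < x) :
    x ∈ Ioc 0 (th m) ↔ m * th m ≤ 1 / x := by
  have hθ := th_pos hm
  rw [mem_Ioc, and_iff_right hx]
  conv_lhs => rw [← one_div_natCast_mul_th hm]
  rw [le_one_div hx (by positivity)]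

theorem le_floor_one_div_mul_th (hm : 0 < m) {x : ℝ} (hx : x ∈ Ioc 0 (th m)) :
    m ≤ ⌊1 / (x * th m)⌋₊ := by
  have hθ := th_pos hm
  rw [Nat.le_floor_iff (by positivity [hx.1]), ← div_div, le_div_iff₀ hθ]
  exact (mem_Ioc_th_iff hm hx.1).1 hx

theorem T_mem_Ico (hm : 0 < m) {x : ℝ} (hx : x ∈ Ioc 0 (th m)) : T m x ∈ Ico 0 (th m) := by
  obtain ⟨hk, hk'⟩ := (floor_one_div_mul_th_eq_iff hm hx.1 _).1 rfl
  rw [T_of_pos hx.1]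
  constructor <;> linarith

theorem measurable_T : Measurable (T m) := by
  unfold T
  exact Measurable.ite (measurableSet_singleton 0) measurable_const (by fun_prop)

/-- The `k`-th branch of `T m` cut at height `b`: where the first digit is `k` and `T m ≤ b`. -/
def branch (m : ℕ) (b : ℝ) (k : ℕ) : Set ℝ := Icc (1 / (b + k * th m)) (1 / (k * th m))

theorem mem_branch_iff {b x : ℝ} (hx : 0 < x) {k : ℕ} (hk : 0 < k * th m) (hb : 0 ≤ b) :
    x ∈ branch m b k ↔ k * th m ≤ 1 / x ∧ 1 / x ≤ b + k * th m := by
  rw [branch, mem_Icc, one_div_le (by positivity) hx, le_one_div hx hk, and_comm]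

theorem preimage_T_Iic_inter_Ioc (hm : 0 < m) {b : ℝ} (hb : 0 ≤ b) (hbθ : b < th m) :
    T m ⁻¹' Iic b ∩ Ioc 0 (th m) = ⋃ j : ℕ, branch m b (m + j) := by
  have hθ := th_pos hm
  ext x
  simp only [mem_inter_iff, mem_preimage, mem_Iic, mem_iUnion]
  constructor
  · rintro ⟨hTx, hx⟩
    obtain ⟨j, hj⟩ := Nat.exists_eq_add_of_le (le_floor_one_div_mul_th hm hx)
    obtain ⟨hk, -⟩ := (floor_one_div_mul_th_eq_iff hm hx.1 _).1 hj
    rw [T_of_pos hx.1, hj] at hTx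
    refine ⟨j, (mem_branch_iff hx.1 (by positivity) hb).2 ⟨hk, by linarith⟩⟩
  · rintro ⟨j, hxj⟩
    have hk : 0 < ((m + j : ℕ) : ℝ) * th m := by positivity
    have hx : 0 < x := lt_of_lt_of_le (by positivity) hxj.1
    obtain ⟨hkx, hxb⟩ := (mem_branch_iff hx hk hb).1 hxj
    have hfloor : ⌊1 / (x * th m)⌋₊ = m + j :=
      (floor_one_div_mul_th_eq_iff hm hx _).2 ⟨hkx, by push_cast at hxb ⊢; linarith⟩
    refine ⟨?_, (mem_Ioc_th_iff hm hx).2 (le_trans ?_ hkx)⟩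
    · rw [T_of_pos hx, hfloor]
      linarith
    · gcongr
      exact_mod_cast Nat.le_add_right m j

theorem pairwise_disjoint_branch (hm : 0 < m) {b : ℝ} (hb : 0 ≤ b) (hbθ : b < th m) :
    Pairwise (Function.onFun Disjoint fun j : ℕ => branch m b (m + j)) := by
  have hθ := th_pos hm
  refine pairwise_disjoint_on _ |>.2 fun i j hij => Set.disjoint_left.2 fun x hxi hxj => ?_
  have hx : 0 < x := lt_of_lt_of_le (by positivity) hxi.1
  obtain ⟨-, hxi⟩ := (mem_branch_iff hx (by positivity) hb).1 hxi
  obtain ⟨hxj, -⟩ := (mem_branch_iff hx (by positivity) hb).1 hxj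
  have : ((m + i : ℕ) : ℝ) + 1 ≤ (m + j : ℕ) := by exact_mod_cast Nat.add_lt_add_left hij m
  nlinarith

def gaussMeasure (m : ℕ) : Measure ℝ :=
  (volume.restrict (Ioc 0 (th m))).withDensity fun x => ENNReal.ofReal (1 / (1 + th m * x))

instance : NullSingletonClass (gaussMeasure m) := by
  unfold gaussMeasure
  infer_instance

def gaussCDF (m : ℕ) (x : ℝ) : ℝ := Real.log (1 + th m * x) / th m

theorem gaussMeasure_le : gaussMeasure m ≤ volume.restrict (Ioc 0 (th m)) := by
  refine (withDensity_mono ?_).trans_eq withDensity_one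
  filter_upwards [ae_restrict_mem measurableSet_Ioc] with x hx
  have : 0 ≤ th m * x := mul_nonneg (by unfold th; positivity) hx.1.le
  exact ENNReal.ofReal_le_one.2 <| div_le_one_of_le₀ (by linarith) (by linarith)

instance : IsFiniteMeasure (gaussMeasure m) :=
  have : IsFiniteMeasure (volume.restrict (Ioc 0 (th m))) :=
    isFiniteMeasure_restrict.2 measure_Ioc_lt_top.ne
  isFiniteMeasure_of_le _ gaussMeasure_le

theorem absolutelyContinuous_gaussMeasure (hm : 0 < m) :
    volume.restrict (Ioc 0 (th m)) ≪ gaussMeasure m := by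
  have hθ := th_pos hm
  refine withDensity_absolutelyContinuous' (by fun_prop) ?_
  filter_upwards [ae_restrict_mem measurableSet_Ioc] with x hx
  have := hx.1
  exact (ENNReal.ofReal_pos.2 (by positivity)).ne'

theorem gaussMeasure_inter_Ioc (s : Set ℝ) :
    gaussMeasure m (s ∩ Ioc 0 (th m)) = gaussMeasure m s := by
  rw [gaussMeasure, withDensity_apply', withDensity_apply',
    Measure.restrict_restrict' measurableSet_Ioc, Measure.restrict_restrict' measurableSet_Ioc,
    inter_assoc, inter_self]

theorem hasDerivAt_gaussCDF (hm : 0 < m) {x : ℝ} (hx : 1 + th m * x ≠ 0) :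
    HasDerivAt (gaussCDF m) (1 / (1 + th m * x)) x := by
  have hθ := (th_pos hm).ne'
  have h := ((((hasDerivAt_id x).const_mul (th m)).const_add 1).log hx).div_const (th m)
  exact h.congr_deriv (by simp only [id]; field_simp)

theorem gaussMeasure_Ioc (hm : 0 < m) {c d : ℝ} (hc : 0 ≤ c) (hcd : c ≤ d) (hd : d ≤ th m) :
    gaussMeasure m (Ioc c d) = ENNReal.ofReal (gaussCDF m d - gaussCDF m c) := by
  have hθ := th_pos hm
  have hpos : ∀ x ∈ Icc c d, 0 < 1 + th m * x := fun x hx => by nlinarith [hx.1]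
  have hcont : ContinuousOn (fun x => 1 / (1 + th m * x)) (Icc c d) :=
    continuousOn_const.div (by fun_prop) fun x hx => (hpos x hx).ne'
  rw [gaussMeasure, withDensity_apply _ measurableSet_Ioc,
    Measure.restrict_restrict measurableSet_Ioc,
    inter_eq_self_of_subset_left (Ioc_subset_Ioc hc hd),
    ← ofReal_integral_eq_lintegral_ofReal
      ((hcont.integrableOn_Icc).mono_set Ioc_subset_Icc_self)
      (ae_restrict_of_forall_mem measurableSet_Ioc fun x hx =>
        (one_div_pos.2 (hpos x (Ioc_subset_Icc_self hx))).le),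
    ← intervalIntegral.integral_of_le hcd,
    intervalIntegral.integral_eq_sub_of_hasDerivAt
      (fun x hx => hasDerivAt_gaussCDF hm (hpos x (by rwa [uIcc_of_le hcd] at hx)).ne')
      (hcont.intervalIntegrable_of_Icc hcd)]

theorem monotoneOn_gaussCDF (hm : 0 < m) : MonotoneOn (gaussCDF m) (Ici 0) := by
  have hθ := th_pos hm
  intro x hx y hy hxy
  unfold gaussCDF
  gcongr
  nlinarith [mem_Ici.1 hx]

theorem gaussCDF_one_div (hm : 0 < m) {y : ℝ} (hy : 0 < y) :
    gaussCDF m (1 / y) = (Real.log (y + th m) - Real.log y) / th m := by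
  have hθ := th_pos hm
  rw [gaussCDF, ← Real.log_div (by positivity) hy.ne']
  congr 2
  field_simp

/-- `gaussMeasure m` of the union of the branches `branch m b k'` with `k' ≥ k`. -/
def branchTail (m : ℕ) (b : ℝ) (k : ℕ) : ℝ :=
  (Real.log (b + k * th m) - Real.log (k * th m)) / th m

theorem branchTail_sub_succ (hm : 0 < m) {b : ℝ} (hb : 0 ≤ b) {k : ℕ} (hk : 0 < k) :
    branchTail m b k - branchTail m b (k + 1) =
      gaussCDF m (1 / (k * th m)) - gaussCDF m (1 / (b + k * th m)) := by
  have hθ := th_pos hm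
  rw [gaussCDF_one_div hm (by positivity), gaussCDF_one_div hm (by positivity), branchTail,
    branchTail]
  push_cast
  ring_nf

theorem branchTail_sub_succ_nonneg (hm : 0 < m) {b : ℝ} (hb : 0 ≤ b) {k : ℕ} (hk : 0 < k) :
    0 ≤ branchTail m b k - branchTail m b (k + 1) := by
  have hθ := th_pos hm
  rw [branchTail_sub_succ hm hb hk, sub_nonneg]
  exact monotoneOn_gaussCDF hm (mem_Ici.2 (by positivity)) (mem_Ici.2 (by positivity))
    (one_div_le_one_div_of_le (by positivity) (by linarith))

theorem gaussMeasure_branch (hm : 0 < m) {b : ℝ} (hb : 0 ≤ b) {k : ℕ} (hk : m ≤ k) :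
    gaussMeasure m (branch m b k) =
      ENNReal.ofReal (branchTail m b k - branchTail m b (k + 1)) := by
  have hθ := th_pos hm
  have hmθ : 0 < (m : ℝ) * th m := by positivity
  have hkθ : (m : ℝ) * th m ≤ k * th m := by gcongr
  rw [branchTail_sub_succ hm hb (hm.trans_le hk), branch, ← measure_congr Ioc_ae_eq_Icc,
    gaussMeasure_Ioc hm (by positivity) (one_div_le_one_div_of_le (by linarith) (by linarith))]
  exact (one_div_le_one_div_of_le hmθ hkθ).trans_eq (one_div_natCast_mul_th hm)

theorem tendsto_branchTail (hm : 0 < m) (b : ℝ) : Tendsto (branchTail m b) atTop (𝓝 0) := by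
  have hθ := th_pos hm
  have hlim : Tendsto (fun k : ℕ => Real.log (1 + b / (k * th m)) / th m) atTop (𝓝 0) := by
    have h : Tendsto (fun k : ℕ => 1 + b / (k * th m)) atTop (𝓝 1) := by
      simpa using
        ((tendsto_natCast_atTop_atTop.atTop_mul_const hθ).const_div_atTop b).const_add 1
    simpa using ((Real.continuousAt_log one_ne_zero).tendsto.comp h).div_const (th m)
  refine hlim.congr' ?_
  filter_upwards [eventually_gt_atTop 0,
    (tendsto_natCast_atTop_atTop.atTop_mul_const hθ).eventually_gt_atTop (-b)] with k hk hkb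
  have hkθ : 0 < (k : ℝ) * th m := by positivity
  rw [branchTail, ← Real.log_div (by linarith) hkθ.ne']
  congr 2
  field_simp
  ring

theorem branchTail_self (hm : 0 < m) {b : ℝ} (hb : 0 ≤ b) :
    branchTail m b m = gaussCDF m b := by
  have hθ := th_pos hm
  have hmθ : 0 < (m : ℝ) * th m := by positivity
  rw [branchTail, gaussCDF, ← Real.log_div (by positivity) hmθ.ne']
  congr 2
  rw [add_div, div_self hmθ.ne', add_comm, div_eq_mul_one_div b, one_div_natCast_mul_th hm,
    mul_comm]

theorem gaussMeasure_Iic (hm : 0 < m) {b : ℝ} (hb : 0 ≤ b) (hbθ : b ≤ th m) :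
    gaussMeasure m (Iic b) = ENNReal.ofReal (gaussCDF m b) := by
  rw [← gaussMeasure_inter_Ioc, Iic_inter_Ioc_of_le hbθ, gaussMeasure_Ioc hm le_rfl hb hbθ]
  simp [gaussCDF]

theorem gaussMeasure_preimage_T_Iic (hm : 0 < m) {b : ℝ} (hb : 0 ≤ b) (hbθ : b < th m) :
    gaussMeasure m (T m ⁻¹' Iic b) = ENNReal.ofReal (gaussCDF m b) := by
  have hnonneg (j : ℕ) : 0 ≤ branchTail m b (m + j) - branchTail m b (m + j + 1) :=
    branchTail_sub_succ_nonneg hm hb (by omega)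
  have hsum : HasSum (fun j => branchTail m b (m + j) - branchTail m b (m + j + 1))
      (branchTail m b m - 0) :=
    hasSum_sub_succ_of_tendsto
      ((tendsto_branchTail hm b).comp (tendsto_atTop_mono (Nat.le_add_left · m) tendsto_id))
      hnonneg
  rw [← gaussMeasure_inter_Ioc, preimage_T_Iic_inter_Ioc hm hb hbθ,
    measure_iUnion (pairwise_disjoint_branch hm hb hbθ) fun _ => measurableSet_Icc]
  simp_rw [gaussMeasure_branch hm hb (Nat.le_add_right m _)]
  rw [← ENNReal.ofReal_tsum_of_nonneg hnonneg hsum.summable, hsum.tsum_eq, sub_zero,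
    branchTail_self hm hb]

theorem preimage_T_Iic_inter_Ioc_of_notMem (hm : 0 < m) {b : ℝ} (hb : b < 0 ∨ th m ≤ b) :
    T m ⁻¹' Iic b ∩ Ioc 0 (th m) = Iic b ∩ Ioc 0 (th m) := by
  ext x
  simp only [mem_inter_iff, mem_preimage, mem_Iic]
  refine and_congr_left fun hx => ?_
  have hTx := T_mem_Ico hm hx
  rcases hb with hb | hb
  · exact iff_of_false (by linarith [hTx.1]) (by linarith [hx.1])
  · exact iff_of_true (by linarith [hTx.2]) (by linarith [hx.2])

theorem measurePreserving_T (hm : 0 < m) :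
    MeasurePreserving (T m) (gaussMeasure m) (gaussMeasure m) := by
  refine ⟨measurable_T, Measure.ext_of_Iic _ _ fun b => ?_⟩
  rw [Measure.map_apply measurable_T measurableSet_Iic]
  by_cases hb : 0 ≤ b ∧ b < th m
  · rw [gaussMeasure_preimage_T_Iic hm hb.1 hb.2, gaussMeasure_Iic hm hb.1 hb.2.le]
  · rw [← gaussMeasure_inter_Ioc, ← gaussMeasure_inter_Ioc (Iic b),
      preimage_T_Iic_inter_Ioc_of_notMem hm (by grind)]

def firstDigitGT (m : ℕ) (c : ℝ) : Set ℝ := {y | c < ⌊1 / (y * th m)⌋₊}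

theorem measurableSet_firstDigitGT (c : ℝ) : MeasurableSet (firstDigitGT m c) :=
  measurableSet_lt measurable_const (by fun_prop)

theorem gaussMeasure_firstDigitGT_le (hm : 0 < m) {c : ℝ} (hc : 0 < c) :
    gaussMeasure m (firstDigitGT m c) ≤ ENNReal.ofReal (1 / c / th m) := by
  have hθ := th_pos hm
  calc gaussMeasure m (firstDigitGT m c)
      ≤ volume (firstDigitGT m c ∩ Ioc 0 (th m)) := by
        rw [← Measure.restrict_apply (measurableSet_firstDigitGT c)]
        exact gaussMeasure_le _
    _ ≤ volume (Ioc 0 (1 / c / th m)) := by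
        refine measure_mono ?_
        rintro y ⟨hyc, hy, -⟩
        refine ⟨hy, ?_⟩
        have h : c < 1 / (y * th m) := hyc.trans_le (Nat.floor_le (by positivity))
        rw [lt_one_div hc (by positivity)] at h
        rw [le_div_iff₀ hθ]
        exact h.le
    _ = ENNReal.ofReal (1 / c / th m) := by simp [Real.volume_Ioc]

theorem mem_limsup_of_infinite {φ : ℕ → ℝ} {x : ℝ}
    (hx : {n : ℕ | 1 ≤ n ∧ φ n < (a m n x : ℝ)}.Infinite) :
    x ∈ limsup (fun j => (T m)^[j] ⁻¹' firstDigitGT m (φ (j + 1))) atTop := by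
  rw [mem_limsup_iff_frequently_mem, Nat.frequently_atTop_iff_infinite]
  refine Set.Infinite.of_image Nat.succ (hx.mono ?_)
  rintro n ⟨hn, hφn⟩
  refine ⟨n - 1, ?_, by omega⟩
  show φ (n - 1 + 1) < (⌊1 / ((T m)^[n - 1] x * th m)⌋₊ : ℝ)
  rwa [Nat.sub_add_cancel hn]

/-- Borel–Bernstein, convergence part: if ∑ 1/φ(n) < ∞ then
λ_θ({x ∈ Ω : a_n(x) > φ(n) i.o.}) = 0. -/
theorem stmt_8 (m : ℕ) (hm : 2 ≤ m) (φ : ℕ → ℝ) (hφ : ∀ n, 1 ≤ n → 0 < φ n)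
    (hs : Summable fun n : ℕ => 1 / φ (n + 1)) :
    lam m {x | x ∈ Omega m ∧ {n : ℕ | 1 ≤ n ∧ φ n < (a m n x : ℝ)}.Infinite} = 0 := by
  have hm₀ : 0 < m := by omega
  set E : ℕ → Set ℝ := fun j => (T m)^[j] ⁻¹' firstDigitGT m (φ (j + 1))
  have hsum : ∑' j, gaussMeasure m (firstDigitGT m (φ (j + 1))) ≠ ∞ :=
    ne_top_of_le_ne_top (hs.div_const (th m)).tsum_ofReal_ne_top <| ENNReal.tsum_le_tsum fun j =>
      gaussMeasure_firstDigitGT_le hm₀ (hφ (j + 1) (Nat.le_add_left 1 j))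
  have hnull := (measurePreserving_T hm₀).measure_limsup_preimage_iterate_eq_zero
    (fun _ => (measurableSet_firstDigitGT _).nullMeasurableSet) hsum
  have hvol : volume (limsup E atTop ∩ Ioc 0 (th m)) = 0 := by
    rw [← Measure.restrict_apply' measurableSet_Ioc]
    exact absolutelyContinuous_gaussMeasure hm₀ hnull
  rw [lam, measure_mono_null ?_ hvol, ENNReal.toReal_zero, zero_div]
  exact fun x hx => ⟨mem_limsup_of_infinite hx.2, hx.1.1.1, hx.1.1.2.le⟩

end Theta
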